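/- Under assumptions A1–A4 (F = ∑_{n=1}^N f_n is μ-strongly convex, each f_n convex with L_n-Lipschitz gradient, h proper convex subdifferentiable, delays bounded by τ̄), if the step-size satisfies α ≤ ((1 + (μ/L)·1/(τ̄+1))^{1/(τ̄+1)} − 1)/μ with L = ∑_n L_n, then the iterates of the asynchronous proximal incremental aggregated gradient method satisfy ‖x_k − x*‖² ≤ (1/(μα+1))^k ‖x_0 − x*‖² for all k ≥ 0, where x* is the minimizer of F + h. -/

import Mathlib

/-!
The prox step minimises a `1/α`-strongly convex model, and `F + h` is `μ`-strongly convex with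
minimiser `x*`. Comparing the two quadratic-growth inequalities at `x_{k+1}`, and bounding each
`fₙ` at its delayed point by the descent lemma and by convexity, gives
```
  (1 + μα) ‖x_{k+1} - x*‖² ≤ ‖x_k - x*‖² - ‖x_{k+1} - x_k‖²
                              + α L (τ̄ + 1) ∑_{j=k-τ̄}^{k} ‖x_{j+1} - x_j‖²,
```
the delayed errors being split into the last `τ̄ + 1` steps by telescoping and Cauchy–Schwarz.
Weighting this by `(1 + μα)^k` and summing, each squared step is charged at most
`∑_{m ≤ τ̄} (1 + μα)^m` times, and the step-size condition says exactly that
`α L (τ̄ + 1) ∑_{m ≤ τ̄} (1 + μα)^m ≤ 1`, so the delay terms are absorbed by the negative ones.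
-/

open RealInnerProductSpace Finset Filter Topology

section Convexity

variable {E : Type*} [NormedAddCommGroup E] [InnerProductSpace ℝ E]

theorem UniformConvexOn.add_le_of_isMinOn {s : Set E} {φ : ℝ → ℝ} {f : E → ℝ} {u z : E}
    (hf : UniformConvexOn s φ f) (hmin : IsMinOn f s u) (hu : u ∈ s) (hz : z ∈ s) :
    f u + φ ‖z - u‖ ≤ f z := by
  have hsegment : ∀ t ∈ Set.Ioc (0 : ℝ) 1, f u + (1 - t) * φ ‖z - u‖ ≤ f z := by
    rintro t ⟨ht0, ht1⟩
    have hab : t + (1 - t) = 1 := add_sub_cancel t 1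
    have hconv := hf.2 hz hu ht0.le (sub_nonneg.2 ht1) hab
    have hle := isMinOn_iff.1 hmin _ (hf.1 hz hu ht0.le (sub_nonneg.2 ht1) hab)
    rw [smul_eq_mul, smul_eq_mul] at hconv
    refine le_of_mul_le_mul_left ?_ ht0
    linear_combination hle + hconv
  have hlim : Tendsto (fun t : ℝ ↦ f u + (1 - t) * φ ‖z - u‖) (𝓝[>] 0)
      (𝓝 (f u + φ ‖z - u‖)) := by
    refine tendsto_nhdsWithin_of_tendsto_nhds ?_
    have hcont : Continuous fun t : ℝ ↦ f u + (1 - t) * φ ‖z - u‖ := by fun_prop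
    simpa using hcont.tendsto 0
  exact le_of_tendsto hlim (eventually_of_mem (Ioc_mem_nhdsGT one_pos) hsegment)

theorem strongConvexOn_of_add_inner_le {s : Set E} {m : ℝ} {f : E → ℝ} {g : E → E}
    (hs : Convex ℝ s) (hfg : ∀ u ∈ s, ∀ v ∈ s, f v + ⟪g v, u - v⟫ + m / 2 * ‖u - v‖ ^ 2 ≤ f u) :
    StrongConvexOn s m f := by
  refine ⟨hs, fun x hx y hy a b ha hb hab ↦ ?_⟩
  obtain rfl : b = 1 - a := eq_sub_of_add_eq' hab
  set p := a • x + (1 - a) • y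
  have hxp : x - p = (1 - a) • (x - y) := by module
  have hyp : y - p = (-a) • (x - y) := by module
  have hx' := hfg x hx p (hs hx hy ha hb hab)
  have hy' := hfg y hy p (hs hx hy ha hb hab)
  rw [hxp, real_inner_smul_right, norm_smul, mul_pow, Real.norm_eq_abs, sq_abs] at hx'
  rw [hyp, real_inner_smul_right, norm_smul, mul_pow, Real.norm_eq_abs, sq_abs] at hy'
  rw [smul_eq_mul, smul_eq_mul]
  linear_combination a * hx' + (1 - a) * hy'

noncomputable def proxObjective (G v : E) (α : ℝ) (h : E → ℝ) (z : E) : ℝ :=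
  ⟪G, z - v⟫ + 1 / (2 * α) * ‖z - v‖ ^ 2 + h z

theorem strongConvexOn_proxObjective (G v : E) (α : ℝ) {h : E → ℝ}
    (hh : ConvexOn ℝ Set.univ h) : StrongConvexOn Set.univ α⁻¹ (proxObjective G v α h) := by
  rw [strongConvexOn_iff_convex]
  have hsplit : (fun z ↦ proxObjective G v α h z - α⁻¹ / 2 * ‖z‖ ^ 2) =
      fun z ↦ h z + innerSL ℝ (G - α⁻¹ • v) z + (1 / (2 * α) * ‖v‖ ^ 2 - ⟪G, v⟫) := by
    funext z
    simp only [proxObjective, innerSL_apply_apply, inner_sub_left, inner_sub_right,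
      real_inner_smul_left, norm_sub_sq_real, real_inner_comm v z]
    ring
  rw [hsplit]
  exact (hh.add ((innerSL ℝ (G - α⁻¹ • v)).toLinearMap.convexOn convex_univ)).add_const _

end Convexity

section Smoothness

variable {E : Type*} [NormedAddCommGroup E] [InnerProductSpace ℝ E] [CompleteSpace E]
  {f : E → ℝ} {g : E → E}

theorem HasGradientAt.hasDerivAt_comp_lineMap {G a b : E} {t : ℝ}
    (hf : HasGradientAt f G (AffineMap.lineMap a b t)) :
    HasDerivAt (fun s ↦ f (AffineMap.lineMap a b s)) ⟪G, b - a⟫ t := by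
  have := hf.hasFDerivAt.comp_hasDerivAt t AffineMap.hasDerivAt_lineMap
  rwa [InnerProductSpace.toDual_apply_apply] at this

theorem ConvexOn.add_inner_le_of_hasGradientAt {G v : E} (hf : ConvexOn ℝ Set.univ f)
    (hG : HasGradientAt f G v) (u : E) : f v + ⟪G, u - v⟫ ≤ f u := by
  have hline : ConvexOn ℝ Set.univ (fun t ↦ f (AffineMap.lineMap v u t)) :=
    hf.comp_affineMap (AffineMap.lineMap v u)
  have hderiv := HasGradientAt.hasDerivAt_comp_lineMap (b := u) (t := 0) (by simpa using hG)
  have := hline.le_slope_of_hasDerivAt trivial trivial zero_lt_one hderiv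
  simp only [slope_def_field, AffineMap.lineMap_apply_one, AffineMap.lineMap_apply_zero,
    sub_zero, div_one] at this
  linarith

theorem le_add_inner_add_sq_of_lipschitz_gradient {L : ℝ}
    (hgrad : ∀ z, HasGradientAt f (g z) z) (hLip : ∀ u v, ‖g u - g v‖ ≤ L * ‖u - v‖) (u v : E) :
    f u ≤ f v + ⟪g v, u - v⟫ + L / 2 * ‖u - v‖ ^ 2 := by
  set φ : ℝ → ℝ := fun t ↦
    f (AffineMap.lineMap v u t) - t * ⟪g v, u - v⟫ - L / 2 * t ^ 2 * ‖u - v‖ ^ 2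
  set φ' : ℝ → ℝ := fun t ↦
    ⟪g (AffineMap.lineMap v u t), u - v⟫ - ⟪g v, u - v⟫ - L * t * ‖u - v‖ ^ 2
  have hderiv : ∀ t, HasDerivAt φ (φ' t) t := fun t ↦ by
    refine ((((hgrad _).hasDerivAt_comp_lineMap (a := v) (b := u)).sub
      ((hasDerivAt_id t).mul_const ⟪g v, u - v⟫)).sub
      (((hasDerivAt_pow 2 t).const_mul (L / 2)).mul_const (‖u - v‖ ^ 2))).congr_deriv ?_
    simp only [φ']
    ring
  have hφ'_nonpos : ∀ t ∈ interior (Set.Icc (0 : ℝ) 1), φ' t ≤ 0 := by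
    intro t ht
    rw [interior_Icc] at ht
    have hdist : AffineMap.lineMap v u t - v = t • (u - v) := AffineMap.lineMap_vsub_left v u t
    calc φ' t = ⟪g (AffineMap.lineMap v u t) - g v, u - v⟫ - L * t * ‖u - v‖ ^ 2 := by
          simp only [φ', inner_sub_left]
      _ ≤ L * ‖AffineMap.lineMap v u t - v‖ * ‖u - v‖ - L * t * ‖u - v‖ ^ 2 := by
          gcongr
          exact (real_inner_le_norm _ _).trans (by gcongr; exact hLip _ _)
      _ = 0 := by
          rw [hdist, norm_smul, Real.norm_of_nonneg ht.1.le]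
          ring
  have hanti := antitoneOn_of_hasDerivWithinAt_nonpos (convex_Icc 0 1)
    (fun t _ ↦ (hderiv t).continuousAt.continuousWithinAt)
    (fun t _ ↦ (hderiv t).hasDerivWithinAt) hφ'_nonpos
  have := hanti (Set.left_mem_Icc.2 zero_le_one) (Set.right_mem_Icc.2 zero_le_one) zero_le_one
  simp only [φ, AffineMap.lineMap_apply_zero, AffineMap.lineMap_apply_one] at this
  linarith

theorem sub_le_inner_add_sq_of_convexOn {L : ℝ} (hf : ConvexOn ℝ Set.univ f)
    (hgrad : ∀ z, HasGradientAt f (g z) z) (hLip : ∀ u v, ‖g u - g v‖ ≤ L * ‖u - v‖)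
    (u w y : E) : f u - f w ≤ ⟪g y, u - w⟫ + L / 2 * ‖u - y‖ ^ 2 := by
  have hdescent := le_add_inner_add_sq_of_lipschitz_gradient hgrad hLip u y
  have hconv := hf.add_inner_le_of_hasGradientAt (hgrad y) w
  have hsplit : ⟪g y, u - w⟫ = ⟪g y, u - y⟫ - ⟪g y, w - y⟫ := by
    rw [← inner_sub_right, sub_sub_sub_cancel_right]
  linarith

end Smoothness

section Step

variable {E : Type*} [NormedAddCommGroup E] [InnerProductSpace ℝ E] [CompleteSpace E]
  {ι : Type*} [Fintype ι]

theorem piag_sq_dist_succ_le {f : ι → E → ℝ} {g : ι → E → E} {L : ι → ℝ} {μ α : ℝ} {h : E → ℝ}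
    {u v xstar : E} {y : ι → E} (hα : 0 < α)
    (hfconv : ∀ n, ConvexOn ℝ Set.univ (f n)) (hgrad : ∀ n z, HasGradientAt (f n) (g n z) z)
    (hLip : ∀ n u v, ‖g n u - g n v‖ ≤ L n * ‖u - v‖)
    (hsc : ∀ u v, (∑ n, f n u) ≥ (∑ n, f n v) + ⟪∑ n, g n v, u - v⟫ + μ / 2 * ‖u - v‖ ^ 2)
    (hhconv : ConvexOn ℝ Set.univ h)
    (hstar : ∀ z, (∑ n, f n xstar) + h xstar ≤ (∑ n, f n z) + h z)
    (hu : ∀ z, proxObjective (∑ n, g n (y n)) v α h u ≤ proxObjective (∑ n, g n (y n)) v α h z) :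
    (μ * α + 1) * ‖u - xstar‖ ^ 2 ≤
      ‖v - xstar‖ ^ 2 - ‖u - v‖ ^ 2 + α * ∑ n, L n * ‖u - y n‖ ^ 2 := by
  set G := ∑ n, g n (y n)
  have hprox := (strongConvexOn_proxObjective G v α hhconv).add_le_of_isMinOn
    (isMinOn_univ_iff.2 hu) trivial (Set.mem_univ xstar)
  have hgrowth := ((strongConvexOn_of_add_inner_le convex_univ fun u _ v _ ↦ hsc u v).add
    hhconv.uniformConvexOn_zero).add_le_of_isMinOn (isMinOn_univ_iff.2 hstar) trivial
    (Set.mem_univ u)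
  have hsmooth : (∑ n, f n u) - ∑ n, f n xstar ≤ ⟪G, u - xstar⟫ + ∑ n, L n / 2 * ‖u - y n‖ ^ 2 := by
    rw [← sum_sub_distrib, sum_inner, ← sum_add_distrib]
    exact sum_le_sum fun n _ ↦
      sub_le_inner_add_sq_of_convexOn (hfconv n) (hgrad n) (hLip n) u xstar (y n)
  have hinner : ⟪G, u - v⟫ - ⟪G, xstar - v⟫ = ⟪G, u - xstar⟫ := by
    rw [← inner_sub_right, sub_sub_sub_cancel_right]
  simp only [proxObjective, Pi.add_apply, Pi.zero_apply, add_zero] at hprox hgrowth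
  rw [norm_sub_rev xstar u, norm_sub_rev xstar v] at hprox
  have hsum : ∑ n, L n / 2 * ‖u - y n‖ ^ 2 = (∑ n, L n * ‖u - y n‖ ^ 2) / 2 := by
    rw [sum_div]; exact sum_congr rfl fun n _ ↦ by ring
  have hcombined : μ / 2 * ‖u - xstar‖ ^ 2 + α⁻¹ / 2 * ‖u - xstar‖ ^ 2 ≤
      1 / (2 * α) * (‖v - xstar‖ ^ 2 - ‖u - v‖ ^ 2) + (∑ n, L n * ‖u - y n‖ ^ 2) / 2 := by
    linarith
  calc (μ * α + 1) * ‖u - xstar‖ ^ 2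
      = 2 * α * (μ / 2 * ‖u - xstar‖ ^ 2 + α⁻¹ / 2 * ‖u - xstar‖ ^ 2) := by
        field_simp
    _ ≤ 2 * α * (1 / (2 * α) * (‖v - xstar‖ ^ 2 - ‖u - v‖ ^ 2) +
        (∑ n, L n * ‖u - y n‖ ^ 2) / 2) := by gcongr
    _ = ‖v - xstar‖ ^ 2 - ‖u - v‖ ^ 2 + α * ∑ n, L n * ‖u - y n‖ ^ 2 := by
        field_simp

end Step

theorem nonneg_of_forall_norm_sub_le_mul {E F : Type*} [NormedAddCommGroup E] [Nontrivial E]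
    [SeminormedAddCommGroup F] {g : E → F} {L : ℝ} (hLip : ∀ u v, ‖g u - g v‖ ≤ L * ‖u - v‖) :
    0 ≤ L := by
  obtain ⟨u, v, huv⟩ := exists_pair_ne E
  exact nonneg_of_mul_nonneg_left ((norm_nonneg _).trans (hLip u v))
    (norm_pos_iff.2 (sub_ne_zero.2 huv))

section Delays

theorem sum_pow_mul_sum_Ico_le {ρ : ℝ} {W : ℕ → ℝ} (hρ : 0 ≤ ρ) (hW : ∀ j, 0 ≤ W j)
    (τ K : ℕ) :
    ∑ k ∈ range K, ρ ^ k * ∑ j ∈ Ico (k - τ) (k + 1), W j ≤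
      (∑ m ∈ range (τ + 1), ρ ^ m) * ∑ j ∈ range K, ρ ^ j * W j := by
  calc ∑ k ∈ range K, ρ ^ k * ∑ j ∈ Ico (k - τ) (k + 1), W j
      = ∑ j ∈ range K, ∑ k ∈ Ico j (min (j + (τ + 1)) K), ρ ^ k * W j := by
        simp_rw [mul_sum]
        refine sum_comm' fun k j ↦ ?_
        simp only [mem_range, mem_Ico]
        omega
    _ ≤ ∑ j ∈ range K, ∑ k ∈ Ico j (j + (τ + 1)), ρ ^ k * W j := by
        gcongr with j
        · exact fun k _ _ ↦ mul_nonneg (pow_nonneg hρ k) (hW j)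
        · exact min_le_left _ _
    _ = (∑ m ∈ range (τ + 1), ρ ^ m) * ∑ j ∈ range K, ρ ^ j * W j := by
        rw [mul_sum]
        refine sum_congr rfl fun j _ ↦ ?_
        rw [sum_Ico_eq_sum_range, add_tsub_cancel_left, sum_mul]
        exact sum_congr rfl fun m _ ↦ by ring

theorem pow_mul_le_of_delayed_recursion {ρ C : ℝ} {τ : ℕ} {V W : ℕ → ℝ} (hρ : 0 ≤ ρ)
    (hC : 0 ≤ C) (hW : ∀ j, 0 ≤ W j) (hgeom : C * ∑ m ∈ range (τ + 1), ρ ^ m ≤ 1)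
    (hrec : ∀ k, ρ * V (k + 1) ≤ V k - W k + C * ∑ j ∈ Ico (k - τ) (k + 1), W j) (K : ℕ) :
    ρ ^ K * V K ≤ V 0 := by
  have htelescoped : ∀ K, ρ ^ K * V K + ∑ k ∈ range K, ρ ^ k * W k ≤
      V 0 + C * ∑ k ∈ range K, ρ ^ k * ∑ j ∈ Ico (k - τ) (k + 1), W j := by
    intro K
    induction K with
    | zero => simp
    | succ K ih =>
      have := mul_le_mul_of_nonneg_left (hrec K) (pow_nonneg hρ K)
      rw [sum_range_succ, sum_range_succ, mul_add, pow_succ]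
      linarith
  have hwindow := mul_le_mul_of_nonneg_left (sum_pow_mul_sum_Ico_le hρ hW τ K) hC
  have hweights : 0 ≤ ∑ j ∈ range K, ρ ^ j * W j :=
    sum_nonneg fun j _ ↦ mul_nonneg (pow_nonneg hρ j) (hW j)
  nlinarith [htelescoped K]

theorem norm_sum_sq_le_card_mul {E : Type*} [SeminormedAddCommGroup E] {ι : Type*}
    (s : Finset ι) (v : ι → E) : ‖∑ i ∈ s, v i‖ ^ 2 ≤ #s * ∑ i ∈ s, ‖v i‖ ^ 2 :=
  (pow_le_pow_left₀ (norm_nonneg _) (norm_sum_le _ _) 2).trans sq_sum_le_card_mul_sum_sq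

theorem norm_sub_sq_le_mul_sum_Ico {E : Type*} [SeminormedAddCommGroup E] (y : ℕ → E)
    {k T τ : ℕ} (hT : T ≤ τ) :
    ‖y (k + 1) - y (k - T)‖ ^ 2 ≤ (τ + 1) * ∑ j ∈ Ico (k - τ) (k + 1), ‖y (j + 1) - y j‖ ^ 2 := by
  rw [← sum_Ico_sub y (by omega : k - T ≤ k + 1)]
  refine (norm_sum_sq_le_card_mul _ _).trans ?_
  gcongr
  · rw [Nat.card_Ico]; exact_mod_cast (by omega : k + 1 - (k - T) ≤ τ + 1)

theorem apply_natCast_sub_eq {α : Type*} {x : ℤ → α} (hpast : ∀ j : ℤ, j < 0 → x (j + 1) = x j)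
    (k T : ℕ) : x ((k : ℤ) - T) = x ((k - T : ℕ) : ℤ) := by
  rcases le_total T k with hTk | hkT
  · rw [Nat.cast_sub hTk]
  · have hconst : ∀ j ≤ (0 : ℤ), x j = x 0 := fun j hj ↦ by
      induction j, hj using Int.leInductionDown with
      | base => rfl
      | pred j hj ih => rw [← ih, ← hpast (j - 1) (by omega), sub_add_cancel]
    rw [Nat.sub_eq_zero_of_le hkT, hconst _ (by omega), Nat.cast_zero]

-- `k - τbar` truncates at `0`; the steps before time `0` vanish anyway, `x` being constant there.
theorem sum_mul_sq_norm_sub_delayed_le {E : Type*} [SeminormedAddCommGroup E] {ι : Type*}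
    [Fintype ι] {x : ℤ → E} (hpast : ∀ j : ℤ, j < 0 → x (j + 1) = x j) {L : ι → ℝ}
    (hL : ∀ n, 0 ≤ L n) {τ : ι → ℕ} {τbar : ℕ} (hτ : ∀ n, τ n ≤ τbar) (k : ℕ) :
    ∑ n, L n * ‖x (k + 1 : ℕ) - x (k - τ n)‖ ^ 2 ≤
      (∑ n, L n) * (τbar + 1) * ∑ j ∈ Ico (k - τbar) (k + 1), ‖x (j + 1 : ℕ) - x j‖ ^ 2 := by
  rw [mul_assoc, sum_mul]
  refine sum_le_sum fun n _ ↦ mul_le_mul_of_nonneg_left ?_ (hL n)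
  rw [apply_natCast_sub_eq hpast]
  exact norm_sub_sq_le_mul_sum_Ico (fun j : ℕ ↦ x j) (hτ n)

theorem stepsize_mul_geom_sum_le_one {μ α Λ : ℝ} {τ : ℕ} (hμ : 0 < μ) (hα : 0 < α) (hΛ : 0 ≤ Λ)
    (hstep : α ≤ ((1 + μ / Λ * (1 / (τ + 1))) ^ ((1 : ℝ) / (τ + 1)) - 1) / μ) :
    α * Λ * (τ + 1) * ∑ m ∈ range (τ + 1), (μ * α + 1) ^ m ≤ 1 := by
  have hΛpos : 0 < Λ := by
    refine hΛ.lt_of_ne fun hΛ0 ↦ ?_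
    rw [← hΛ0, div_zero, zero_mul, add_zero, Real.one_rpow, sub_self, zero_div] at hstep
    linarith
  set c := μ / Λ * (1 / (τ + 1))
  have hexp : (1 : ℝ) / (τ + 1) = ((τ + 1 : ℕ) : ℝ)⁻¹ := by push_cast; rw [one_div]
  have hpow : (μ * α + 1) ^ (τ + 1) ≤ 1 + c := by
    calc (μ * α + 1) ^ (τ + 1) ≤ ((1 + c) ^ ((1 : ℝ) / (τ + 1))) ^ (τ + 1) := by
          gcongr
          rw [le_div_iff₀ hμ] at hstep
          linarith
      _ = 1 + c := by rw [hexp, Real.rpow_inv_natCast_pow (by positivity) (by omega)]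
  rw [geom_sum_eq (by nlinarith) (τ + 1), add_sub_cancel_right,
    ← mul_div_assoc, div_le_one (by positivity)]
  calc α * Λ * (τ + 1) * ((μ * α + 1) ^ (τ + 1) - 1) ≤ α * Λ * (τ + 1) * c := by
        gcongr; linarith
    _ = μ * α := by simp only [c]; field_simp

end Delays

/-- Linear convergence (Theorem 1) for the asynchronous proximal incremental
aggregated gradient (PIAG) method under assumptions A1--A4. -/
theorem piag_linear_convergence {d N : ℕ}
    (f : Fin N → EuclideanSpace ℝ (Fin d) → ℝ)
    (g : Fin N → EuclideanSpace ℝ (Fin d) → EuclideanSpace ℝ (Fin d))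
    (L : Fin N → ℝ) (μ α : ℝ) (τbar : ℕ)
    (h : EuclideanSpace ℝ (Fin d) → ℝ)
    (x : ℤ → EuclideanSpace ℝ (Fin d))
    (τ : ℤ → Fin N → ℕ)
    (xstar : EuclideanSpace ℝ (Fin d))
    (hμ : 0 < μ) (hα : 0 < α)
    -- A2: each fₙ convex with Lₙ-Lipschitz gradient
    (hfconv : ∀ n, ConvexOn ℝ Set.univ (f n))
    (hgrad : ∀ n z, HasGradientAt (f n) (g n z) z)
    (hLip : ∀ n u v, ‖g n u - g n v‖ ≤ L n * ‖u - v‖)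
    -- A1: F = ∑ fₙ is μ-strongly convex
    (hsc : ∀ u v, (∑ n, f n u) ≥ (∑ n, f n v) + ⟪∑ n, g n v, u - v⟫ +
      μ / 2 * ‖u - v‖ ^ 2)
    -- A3: h convex (hence subdifferentiable on its domain)
    (hhconv : ConvexOn ℝ Set.univ h)
    -- A4: bounded delays
    (hτ : ∀ k n, τ k n ≤ τbar)
    -- iterates fixed before time 0
    (hpast : ∀ j : ℤ, j < 0 → x (j + 1) = x j)
    -- update rule: x_{k+1} minimizes the proximal model with aggregated gradient g_k
    (hupdate : ∀ k : ℤ, 0 ≤ k → ∀ z,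
      ⟪∑ n, g n (x (k - τ k n)), x (k + 1) - x k⟫ +
        1 / (2 * α) * ‖x (k + 1) - x k‖ ^ 2 + h (x (k + 1)) ≤
      ⟪∑ n, g n (x (k - τ k n)), z - x k⟫ +
        1 / (2 * α) * ‖z - x k‖ ^ 2 + h z)
    -- x* minimizes F + h
    (hstar : ∀ z, (∑ n, f n xstar) + h xstar ≤ (∑ n, f n z) + h z)
    -- step-size condition
    (hstep : α ≤ ((1 + μ / (∑ n, L n) * (1 / (τbar + 1))) ^
      ((1 : ℝ) / (τbar + 1)) - 1) / μ) :
    ∀ k : ℕ,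
      ‖x k - xstar‖ ^ 2 ≤ (1 / (μ * α + 1)) ^ k * ‖x 0 - xstar‖ ^ 2 := by
  rcases subsingleton_or_nontrivial (EuclideanSpace ℝ (Fin d)) with hE | hE
  · intro k
    simp [Subsingleton.elim (x k) xstar, Subsingleton.elim (x 0) xstar]
  have hL : ∀ n, 0 ≤ L n := fun n ↦ nonneg_of_forall_norm_sub_le_mul (hLip n)
  have hΛ : 0 ≤ ∑ n, L n := sum_nonneg fun n _ ↦ hL n
  have hgeom := stepsize_mul_geom_sum_le_one hμ hα hΛ hstep
  have hrec : ∀ k : ℕ, (μ * α + 1) * ‖x (k + 1 : ℕ) - xstar‖ ^ 2 ≤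
      ‖x k - xstar‖ ^ 2 - ‖x (k + 1 : ℕ) - x k‖ ^ 2 + α * (∑ n, L n) * (τbar + 1) *
        ∑ j ∈ Ico (k - τbar) (k + 1), ‖x (j + 1 : ℕ) - x j‖ ^ 2 := fun k ↦ by
    have hone := piag_sq_dist_succ_le hα hfconv hgrad hLip hsc hhconv hstar
      (hupdate k k.cast_nonneg)
    have hdelay := sum_mul_sq_norm_sub_delayed_le hpast hL (hτ k) k
    push_cast at hdelay ⊢
    linear_combination hone + α * hdelay
  intro k
  have := pow_mul_le_of_delayed_recursion (V := fun k : ℕ ↦ ‖x k - xstar‖ ^ 2)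
    (W := fun j : ℕ ↦ ‖x (j + 1 : ℕ) - x j‖ ^ 2) (by positivity)
    (mul_nonneg (mul_nonneg hα.le hΛ) (by positivity)) (fun j ↦ by positivity) hgeom hrec k
  rw [div_pow, one_pow, one_div_mul_eq_div, le_div_iff₀ (by positivity)]
  simpa [mul_comm] using this
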